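/- Let A and B be pattern classes and let f : A → B be a bijection. Then f is an isomorphism of pattern classes if and only if for every τ ∈ A the image of the shadow of τ under f equals the shadow of f(τ), i.e. {f(σ) : σ ∈ ∂τ} = ∂(f(τ)). (Note that ∂τ ⊆ A since A is closed downwards.) -/

import Mathlib

/-- A permutation of length `n ≥ 1` in one-line notation: a nonempty list of
natural numbers that is a rearrangement of `1, …, n` where `n` is its length. -/
def IsPermList (l : List ℕ) : Prop := l ≠ [] ∧ l.Perm (List.range' 1 l.length)

instance (l : List ℕ) : Decidable (IsPermList l) :=
  inferInstanceAs (Decidable (l ≠ [] ∧ l.Perm (List.range' 1 l.length)))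

/-- The type of all (finite, nonempty) permutations. -/
abbrev Permu := {l : List ℕ // IsPermList l}

/-- Helper to construct explicit permutations. -/
def p (l : List ℕ) (h : IsPermList l := by decide) : Permu := ⟨l, h⟩

/-- Pattern containment: `σ` is contained in `τ` when some (not necessarily
contiguous) subsequence of `τ` is order isomorphic to `σ`. -/
def Contains (σ τ : Permu) : Prop :=
  ∃ u : List ℕ, u.Sublist τ.val ∧ u.length = σ.val.length ∧
    ∀ i j : ℕ, i < u.length → j < u.length →
      (u.getD i 0 < u.getD j 0 ↔ σ.val.getD i 0 < σ.val.getD j 0)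

/-- A pattern class: a set of permutations closed downwards under containment. -/
def IsPatternClass (A : Set Permu) : Prop :=
  ∀ σ τ : Permu, τ ∈ A → Contains σ τ → σ ∈ A

/-- `Av B` is the set of permutations containing no member of the set `B`. -/
def Av (B : Set Permu) : Set Permu := {π | ∀ β ∈ B, ¬ Contains β π}

/-- An isomorphism of pattern classes is a bijection which preserves and
reflects containment. -/
def IsIso {A B : Set Permu} (f : ↥A → ↥B) : Prop :=
  Function.Bijective f ∧
  ∀ σ τ : ↥A, Contains σ.val τ.val ↔ Contains (f σ).val (f τ).val

/-- The shadow of `τ`: the permutations of length one less that are contained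
in `τ`. -/
def shadow (τ : Permu) : Set Permu :=
  {σ : Permu | σ.val.length + 1 = τ.val.length ∧ Contains σ τ}

/-! Containment is a partial order on permutations, graded by length. Antisymmetry and transitivity
rest on standardization: a permutation is the only one with its pattern, and it is recovered from
any list with that pattern by replacing each entry with its rank.

Inside a pattern class every containment `σ ≤ τ` with `|σ| < |τ|` passes through a member of the
shadow of `τ` (delete an entry of `τ` outside a copy of `σ`), so containment is the
reflexive-transitive closure of the shadow relation; and the shadow relation is the covering
relation of containment. The first fact makes a shadow-preserving bijection preserve containment,
the second makes a containment-preserving bijection preserve shadows. -/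

lemma List.countP_le_range'_one (n x : ℕ) : (List.range' 1 n).countP (· ≤ x) = min n x := by
  induction n with
  | zero => simp
  | succ n ih =>
    rw [List.range'_concat, List.countP_append, ih, List.countP_singleton]
    split_ifs with h <;> simp at h <;> omega

lemma List.map_getD_range {α : Type*} (u : List α) (d : α) :
    (List.range u.length).map (u.getD · d) = u :=
  List.ext_getElem (by simp) fun _ _ h => by
    simp [List.getD_eq_getElem?_getD, List.getElem?_eq_getElem h]

lemma List.Sublist.exists_length_succ_eq {α : Type*} {u w : List α} (h : u.Sublist w)
    (hlt : u.length < w.length) : ∃ v, u.Sublist v ∧ v.Sublist w ∧ v.length + 1 = w.length := by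
  induction h with
  | slnil => simp at hlt
  | cons a h _ => exact ⟨_, h, List.sublist_cons_self a _, rfl⟩
  | cons_cons a _ ih =>
    obtain ⟨v, huv, hvw, hv⟩ := ih (by simpa using hlt)
    exact ⟨a :: v, huv.cons_cons a, hvw.cons_cons a, by simp [hv]⟩

namespace IsPermList

variable {l : List ℕ}

lemma nodup (h : IsPermList l) : l.Nodup :=
  h.2.nodup_iff.mpr List.nodup_range'

lemma mem_iff (h : IsPermList l) {x : ℕ} : x ∈ l ↔ 1 ≤ x ∧ x ≤ l.length := by
  rw [h.2.mem_iff, List.mem_range'_1]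
  omega

end IsPermList

-- `Contains σ τ` unfolds to `∃ u, u.Sublist τ.val ∧ SamePattern u σ.val`.
def SamePattern (u v : List ℕ) : Prop :=
  u.length = v.length ∧
    ∀ i j : ℕ, i < u.length → j < u.length →
      (u.getD i 0 < u.getD j 0 ↔ v.getD i 0 < v.getD j 0)

namespace SamePattern

variable {u v w : List ℕ}

lemma symm (h : SamePattern u v) : SamePattern v u :=
  ⟨h.1.symm, fun i j hi hj => (h.2 i j (h.1 ▸ hi) (h.1 ▸ hj)).symm⟩

lemma trans (huv : SamePattern u v) (hvw : SamePattern v w) : SamePattern u w :=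
  ⟨huv.1.trans hvw.1, fun i j hi hj =>
    (huv.2 i j hi hj).trans (hvw.2 i j (huv.1 ▸ hi) (huv.1 ▸ hj))⟩

end SamePattern

lemma samePattern_map {g : ℕ → ℕ} {u : List ℕ} (hg : ∀ x ∈ u, ∀ y ∈ u, g x < g y ↔ x < y) :
    SamePattern (u.map g) u := by
  refine ⟨List.length_map _, fun i j hi hj => ?_⟩
  rw [List.length_map] at hi hj
  simp only [List.getD_eq_getElem?_getD, List.getElem?_map, List.getElem?_eq_getElem hi,
    List.getElem?_eq_getElem hj, Option.map_some, Option.getD_some]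
  exact hg _ (List.getElem_mem hi) _ (List.getElem_mem hj)

def rank (v : List ℕ) (x : ℕ) : ℕ := v.countP (· ≤ x)

lemma rank_mono (v : List ℕ) : Monotone (rank v) :=
  fun _ _ hxy => List.countP_mono_left fun _ _ ha => by simp at ha ⊢; omega

lemma rank_lt_rank {v : List ℕ} {x y : ℕ} (hy : y ∈ v) (hxy : x < y) : rank v x < rank v y := by
  induction v with
  | nil => simp at hy
  | cons a v ih =>
    have hmono := rank_mono v hxy.le
    simp only [rank, List.countP_cons, decide_eq_true_eq] at ih hmono ⊢
    rcases List.mem_cons.mp hy with rfl | hy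
    · simp only [if_neg (not_le.mpr hxy), if_pos le_rfl]
      omega
    · have := ih hy
      split_ifs <;> omega

lemma rank_lt_rank_iff {v : List ℕ} {x y : ℕ} (hy : y ∈ v) : rank v x < rank v y ↔ x < y :=
  ⟨fun h => lt_of_not_ge fun hyx => (rank_mono v hyx).not_gt h, rank_lt_rank hy⟩

def standardize (v : List ℕ) : List ℕ := v.map (rank v)

lemma samePattern_standardize (v : List ℕ) : SamePattern (standardize v) v :=
  samePattern_map fun _ _ _ hy => rank_lt_rank_iff hy

lemma isPermList_standardize {v : List ℕ} (hv : v.Nodup) (hne : v ≠ []) : IsPermList (standardize v) := by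
  have hnd : (standardize v).Nodup := hv.map_on fun x hx y hy hxy => by
    by_contra hxy'
    rcases Nat.lt_or_gt_of_ne hxy' with h | h
    · exact (rank_lt_rank hy h).ne hxy
    · exact (rank_lt_rank hx h).ne hxy.symm
  have hsub : standardize v ⊆ List.range' 1 (standardize v).length := by
    intro x hx
    obtain ⟨a, ha, rfl⟩ := List.mem_map.mp hx
    have hpos : 0 < rank v a := List.countP_pos_iff.mpr ⟨a, ha, by simp⟩
    have hle : rank v a ≤ v.length := List.countP_le_length
    simp only [standardize, List.length_map, List.mem_range'_1]
    omega
  exact ⟨by simpa [standardize] using hne, (hnd.subperm hsub).perm_of_length_le (by simp)⟩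

lemma IsPermList.standardize_eq {l : List ℕ} (h : IsPermList l) : standardize l = l := by
  conv_rhs => rw [← List.map_id l]
  refine List.map_congr_left fun x hx => ?_
  rw [rank, h.2.countP_eq, List.countP_le_range'_one]
  have := h.mem_iff.mp hx
  simp only [id]
  omega

lemma rank_eq_countP_range (u : List ℕ) (x : ℕ) :
    rank u x = (List.range u.length).countP (fun j => u.getD j 0 ≤ x) := by
  conv_lhs => rw [rank, ← u.map_getD_range 0, List.countP_map]
  rfl

lemma SamePattern.rank_getD_eq {u v : List ℕ} (h : SamePattern u v) {i : ℕ} (hi : i < u.length) :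
    rank u (u.getD i 0) = rank v (v.getD i 0) := by
  rw [rank_eq_countP_range, rank_eq_countP_range, ← h.1]
  refine List.countP_congr fun j hj => ?_
  simp only [decide_eq_true_eq, ← not_lt, h.2 i j hi (List.mem_range.mp hj)]

lemma SamePattern.standardize_eq {u v : List ℕ} (h : SamePattern u v) : standardize u = standardize v :=
  List.ext_getElem (by simp [standardize, h.1]) fun i hu hv => by
    simp only [standardize, List.getElem_map]
    simp only [standardize, List.length_map] at hu hv
    rw [← List.getD_eq_getElem u 0 hu, ← List.getD_eq_getElem v 0 hv, h.rank_getD_eq hu]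

lemma SamePattern.eq_of_isPermList {l l' : List ℕ} (hl : IsPermList l) (hl' : IsPermList l')
    (h : SamePattern l l') : l = l' := by
  rw [← hl.standardize_eq, ← hl'.standardize_eq, h.standardize_eq]

namespace Contains

variable {σ τ ρ : Permu}

lemma refl (σ : Permu) : Contains σ σ :=
  ⟨σ.val, List.Sublist.refl _, rfl, fun _ _ _ _ => Iff.rfl⟩

lemma length_le (h : Contains σ τ) : σ.val.length ≤ τ.val.length := by
  obtain ⟨u, hu, hlen, -⟩ := h
  exact hlen ▸ hu.length_le

lemma eq_of_length_eq (h : Contains σ τ) (hlen : σ.val.length = τ.val.length) : σ = τ := by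
  obtain ⟨u, hu, hpat : SamePattern u σ.val⟩ := h
  obtain rfl : u = τ.val := hu.eq_of_length (hpat.1.trans hlen)
  exact (Subtype.ext (hpat.eq_of_isPermList τ.prop σ.prop)).symm

lemma trans (hσρ : Contains σ ρ) (hρτ : Contains ρ τ) : Contains σ τ := by
  obtain ⟨u, hu, hpat : SamePattern u σ.val⟩ := hσρ
  obtain ⟨w, hwτ, hwρ : SamePattern w ρ.val⟩ := hρτ
  rw [← ρ.prop.standardize_eq, ← hwρ.standardize_eq, standardize] at hu
  obtain ⟨u₀, hu₀, rfl⟩ := List.sublist_map_iff.mp hu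
  exact ⟨u₀, hu₀.trans hwτ,
    (samePattern_map fun _ _ _ hy => rank_lt_rank_iff (hu₀.subset hy)).symm.trans hpat⟩

lemma exists_mem_shadow (h : Contains σ τ) (hlt : σ.val.length < τ.val.length) :
    ∃ ρ ∈ shadow τ, Contains σ ρ := by
  obtain ⟨u, hu, hpat : SamePattern u σ.val⟩ := h
  obtain ⟨v, huv, hvτ, hv⟩ := hu.exists_length_succ_eq (hpat.1 ▸ hlt)
  have hne : v ≠ [] := by
    rintro rfl
    have := List.length_pos_iff.mpr σ.prop.1
    simp at hv
    omega
  refine ⟨⟨standardize v, isPermList_standardize (τ.prop.nodup.sublist hvτ) hne⟩,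
    ⟨by simpa [standardize] using hv, v, hvτ, (samePattern_standardize v).symm⟩,
    u.map (rank v), huv.map _, ?_⟩
  exact (samePattern_map fun _ _ _ hy => rank_lt_rank_iff (huv.subset hy)).trans hpat

end Contains

namespace IsPatternClass

variable {C : Set Permu}

lemma mem_shadow_iff (hC : IsPatternClass C) (σ τ : ↥C) :
    σ.val ∈ shadow τ.val ↔
      Contains σ.val τ.val ∧ ¬ Contains τ.val σ.val ∧
        ∀ ρ : ↥C, Contains σ.val ρ.val → Contains ρ.val τ.val →
          Contains ρ.val σ.val ∨ Contains τ.val ρ.val := by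
  constructor
  · rintro ⟨hlen, hστ⟩
    refine ⟨hστ, fun hτσ => by have := hτσ.length_le; omega, fun ρ hσρ hρτ => ?_⟩
    rcases hσρ.length_le.eq_or_lt with h | h
    · exact .inl (hσρ.eq_of_length_eq h ▸ .refl _)
    · exact .inr (hρτ.eq_of_length_eq (by have := hρτ.length_le; omega) ▸ .refl _)
  · rintro ⟨hστ, hτσ, hcover⟩
    refine ⟨?_, hστ⟩
    by_contra hne
    have hlt : σ.val.val.length < τ.val.val.length :=
      hστ.length_le.lt_of_ne fun h => hτσ (hστ.eq_of_length_eq h ▸ .refl _)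
    obtain ⟨ρ, ⟨hρ, hρτ⟩, hσρ⟩ := hστ.exists_mem_shadow hlt
    rcases hcover ⟨ρ, hC _ _ τ.prop hρτ⟩ hσρ hρτ with h | h
    · have : ρ.val.length ≤ σ.val.val.length := h.length_le
      omega
    · have : τ.val.val.length ≤ ρ.val.length := h.length_le
      omega

lemma reflTransGen_of_contains (hC : IsPatternClass C) {σ τ : ↥C} (h : Contains σ.val τ.val) :
    Relation.ReflTransGen (fun x y : ↥C => x.val ∈ shadow y.val) σ τ := by
  rcases h.length_le.eq_or_lt with heq | hlt
  · rw [Subtype.ext (h.eq_of_length_eq heq)]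
  · obtain ⟨ρ, hρ, hσρ⟩ := h.exists_mem_shadow hlt
    have := hρ.1 -- for the termination proof
    exact (reflTransGen_of_contains hC (τ := ⟨ρ, hC _ _ τ.prop hρ.2⟩) hσρ).tail hρ
termination_by τ.val.val.length

lemma contains_iff_reflTransGen (hC : IsPatternClass C) (σ τ : ↥C) :
    Contains σ.val τ.val ↔ Relation.ReflTransGen (fun x y : ↥C => x.val ∈ shadow y.val) σ τ := by
  refine ⟨hC.reflTransGen_of_contains, fun h => ?_⟩
  induction h with
  | refl => exact .refl _
  | tail _ hρτ ih => exact ih.trans hρτ.2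

end IsPatternClass

lemma Function.Bijective.reflTransGen_iff {α β : Type*} {r : α → α → Prop} {s : β → β → Prop}
    {f : α → β} (hf : Function.Bijective f) (h : ∀ a b, r a b ↔ s (f a) (f b)) (a b : α) :
    Relation.ReflTransGen r a b ↔ Relation.ReflTransGen s (f a) (f b) := by
  refine ⟨Relation.ReflTransGen.lift f (fun a b => (h a b).1) a b, fun hab => ?_⟩
  let e := Equiv.ofBijective f hf
  have hfe : ∀ y, f (e.symm y) = y := e.apply_symm_apply
  have hef : ∀ x, e.symm (f x) = x := e.symm_apply_apply
  have := Relation.ReflTransGen.lift e.symm (fun x y hxy => (h _ _).2 (by rwa [hfe, hfe]))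
    (f a) (f b) hab
  rwa [Function.onFun, hef, hef] at this

lemma image_shadow_eq_shadow_iff {A B : Set Permu} (hB : IsPatternClass B) {f : ↥A → ↥B}
    (hf : Function.Bijective f) :
    (∀ τ : ↥A, {π : Permu | ∃ σ : ↥A, σ.val ∈ shadow τ.val ∧ (f σ).val = π}
        = shadow (f τ).val) ↔
      ∀ σ τ : ↥A, σ.val ∈ shadow τ.val ↔ (f σ).val ∈ shadow (f τ).val := by
  refine ⟨fun h σ τ => ?_, fun h τ => Set.ext fun π => ⟨?_, fun hπ => ?_⟩⟩
  · rw [← h τ]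
    refine ⟨fun hσ => ⟨σ, hσ, rfl⟩, ?_⟩
    rintro ⟨σ', hσ', hf'⟩
    rwa [← hf.1 (Subtype.ext hf')]
  · rintro ⟨σ, hσ, rfl⟩
    exact (h σ τ).1 hσ
  · obtain ⟨σ, hσ⟩ := hf.2 ⟨π, hB _ _ (f τ).prop hπ.2⟩
    exact ⟨σ, (h σ τ).2 (by rwa [hσ]), by rw [hσ]⟩

theorem statement_0 (A B : Set Permu) (hA : IsPatternClass A) (hB : IsPatternClass B)
    (f : ↥A → ↥B) (hf : Function.Bijective f) :
    (∀ σ τ : ↥A, Contains σ.val τ.val ↔ Contains (f σ).val (f τ).val) ↔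
    (∀ τ : ↥A, {π : Permu | ∃ σ : ↥A, σ.val ∈ shadow τ.val ∧ (f σ).val = π}
        = shadow (f τ).val) := by
  rw [image_shadow_eq_shadow_iff hB hf]
  refine ⟨fun hcontains σ τ => ?_, fun hshadow σ τ => ?_⟩
  · simp only [hA.mem_shadow_iff, hB.mem_shadow_iff, hf.2.forall, hcontains]
  · rw [hA.contains_iff_reflTransGen, hB.contains_iff_reflTransGen]
    exact hf.reflTransGen_iff hshadow σ τ
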